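/- For |z| < 1, the lattice Green's function P(0,0;z) = (1/pi^2) * integral over [0,pi]^2 of dk_1 dk_2/(1 - z cos k_1 cos k_2) equals (2/pi) * K(z^2), where K(m) = integral from 0 to pi/2 of dt / sqrt(1 - m sin^2 t) is the complete elliptic integral of the first kind (with parameter m = modulus squared). -/

import Mathlib

/-! For `|a| < 1` the half-angle substitution gives `∫₀^π dk / (1 - a cos k) = π / √(1 - a²)`.
Integrating first in `k₂` with `a = z cos k₁` leaves `π ∫₀^π dk₁ / √(1 - z² cos² k₁)`, and
the reflections `k ↦ π - k` and `k ↦ π/2 - k` fold this integrand onto `[0, π/2]` as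
`2 K(z²)`. -/

open scoped Real

/-- The complete elliptic integral of the first kind in the parameter convention:
`K(m) = ∫₀^{π/2} dt/√(1 - m sin²t)`. -/
noncomputable def ellipticK (m : ℝ) : ℝ :=
  ∫ t in (0:ℝ)..(π / 2), 1 / Real.sqrt (1 - m * Real.sin t ^ 2)

open Real intervalIntegral

lemma integral_comp_cos_eq_add_integral_comp_neg_cos {f : ℝ → ℝ}
    (hf : IntervalIntegrable (fun x => f (cos x)) MeasureTheory.volume 0 π) :
    ∫ x in (0:ℝ)..π, f (cos x) =
      (∫ x in (0:ℝ)..π / 2, f (cos x)) + ∫ x in (0:ℝ)..π / 2, f (-cos x) := by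
  have hpi := pi_pos
  have hreflect : ∫ x in π / 2..π, f (cos x) = ∫ x in (0:ℝ)..π / 2, f (-cos x) := by
    simpa [cos_pi_sub, show π - π / 2 = π / 2 by ring] using
      (integral_comp_sub_left (fun x => f (cos x)) π (a := 0) (b := π / 2)).symm
  rw [← hreflect, integral_add_adjacent_intervals]
  · exact hf.mono_set (Set.uIcc_subset_uIcc_left (by simp [Set.uIcc_of_le, hpi.le, div_nonneg]))
  · exact hf.mono_set (Set.uIcc_subset_uIcc_right (by simp [Set.uIcc_of_le, hpi.le, div_nonneg]))

lemma integral_comp_cos_eq_integral_comp_sin (f : ℝ → ℝ) :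
    ∫ x in (0:ℝ)..π / 2, f (cos x) = ∫ x in (0:ℝ)..π / 2, f (sin x) := by
  simpa [cos_pi_div_two_sub] using
    (integral_comp_sub_left (fun x => f (cos x)) (π / 2) (a := 0) (b := π / 2)).symm

section OneSubMulCos

variable {a : ℝ}

lemma abs_mul_cos_lt_one (ha : |a| < 1) (x : ℝ) : |a * cos x| < 1 := by
  rw [abs_mul]
  exact (mul_le_of_le_one_right (abs_nonneg a) (abs_cos_le_one x)).trans_lt ha

lemma one_sub_mul_cos_pos (ha : |a| < 1) (x : ℝ) : 0 < 1 - a * cos x := by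
  linarith [(abs_lt.mp (abs_mul_cos_lt_one ha x)).2]

lemma continuous_one_div_one_sub_mul_cos (ha : |a| < 1) :
    Continuous fun x => 1 / (1 - a * cos x) := by
  fun_prop (disch := exact fun x => (one_sub_mul_cos_pos ha x).ne')

lemma hasDerivAt_arctan_mul_tan_half (ha : |a| < 1) {x : ℝ} (hx : x ∈ Set.Ioo (-π) π) :
    HasDerivAt
      (fun y => 2 / √(1 - a ^ 2) * arctan ((1 + a) / √(1 - a ^ 2) * tan (y / 2)))
      (1 / (1 - a * cos x)) x := by
  have ha₂ : a ^ 2 < 1 := (sq_lt_one_iff_abs_lt_one a).2 ha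
  have hs : √(1 - a ^ 2) ^ 2 = 1 - a ^ 2 := sq_sqrt (sub_nonneg.2 ha₂.le)
  have hs₀ : 0 < √(1 - a ^ 2) := sqrt_pos.2 (sub_pos.2 ha₂)
  have hden := (one_sub_mul_cos_pos ha x).ne'
  have hc : 0 < cos (x / 2) := cos_pos_of_mem_Ioo ⟨by linarith [hx.1], by linarith [hx.2]⟩
  refine ((((hasDerivAt_tan hc.ne').comp x ((hasDerivAt_id x).div_const 2)).const_mul
    ((1 + a) / √(1 - a ^ 2))).arctan.const_mul (2 / √(1 - a ^ 2))).congr_deriv ?_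
  have hcos : cos x = cos (x / 2) ^ 2 - sin (x / 2) ^ 2 := by
    rw [← cos_two_mul', mul_div_cancel₀ x two_ne_zero]
  rw [hcos] at hden ⊢
  simp only [Function.comp_apply, id, tan_eq_sin_div_cos]
  field_simp
  linear_combination (-(1 + a)) * sin_sq_add_cos_sq (x / 2) - cos (x / 2) ^ 2 * hs

lemma integral_zero_pi_div_two_one_div_one_sub_mul_cos (ha : |a| < 1) :
    ∫ x in (0:ℝ)..π / 2, 1 / (1 - a * cos x) =
      2 / √(1 - a ^ 2) * arctan ((1 + a) / √(1 - a ^ 2)) := by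
  have hpi := pi_pos
  rw [integral_eq_sub_of_hasDerivAt (fun x hx => hasDerivAt_arctan_mul_tan_half ha ?_)
    ((continuous_one_div_one_sub_mul_cos ha).intervalIntegrable _ _)]
  · simp [show π / 2 / 2 = π / 4 by ring]
  · rw [Set.uIcc_of_le (by positivity)] at hx
    exact ⟨by linarith [hx.1], by linarith [hx.2]⟩

/- The antiderivative blows up at `x = π`, so instead of a limit we fold `[π/2, π]` onto
`[0, π/2]`, which replaces `a` by `-a`; the two arctangents are then of reciprocal numbers. -/
lemma integral_one_div_one_sub_mul_cos (ha : |a| < 1) :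
    ∫ x in (0:ℝ)..π, 1 / (1 - a * cos x) = π / √(1 - a ^ 2) := by
  have ha₂ : a ^ 2 < 1 := (sq_lt_one_iff_abs_lt_one a).2 ha
  have hs : √(1 - a ^ 2) ^ 2 = 1 - a ^ 2 := sq_sqrt (sub_nonneg.2 ha₂.le)
  have hs₀ : 0 < √(1 - a ^ 2) := sqrt_pos.2 (sub_pos.2 ha₂)
  have ha₁ : 0 < 1 + a := by linarith [abs_lt.mp ha]
  have hneg (x : ℝ) : 1 / (1 - a * -cos x) = 1 / (1 - -a * cos x) := by ring_nf
  rw [integral_comp_cos_eq_add_integral_comp_neg_cos (f := fun c => 1 / (1 - a * c))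
      ((continuous_one_div_one_sub_mul_cos ha).intervalIntegrable _ _),
    integral_congr fun x _ => hneg x, integral_zero_pi_div_two_one_div_one_sub_mul_cos ha,
    integral_zero_pi_div_two_one_div_one_sub_mul_cos (by rwa [abs_neg]), neg_sq, ← sub_eq_add_neg]
  have hinv : (1 - a) / √(1 - a ^ 2) = ((1 + a) / √(1 - a ^ 2))⁻¹ := by
    field_simp
    linear_combination -hs
  rw [hinv, arctan_inv_of_pos (by positivity)]
  field_simp
  ring

end OneSubMulCos

lemma integral_one_div_sqrt_one_sub_mul_cos_sq {m : ℝ} (hm : m < 1) :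
    ∫ x in (0:ℝ)..π, 1 / √(1 - m * cos x ^ 2) = 2 * ellipticK m := by
  have hpos (x : ℝ) : 0 < 1 - m * cos x ^ 2 := by
    nlinarith [mul_nonneg (sub_nonneg.2 hm.le) (sq_nonneg (cos x)), cos_sq_le_one x]
  have hcont : Continuous fun x => 1 / √(1 - m * cos x ^ 2) := by
    fun_prop (disch := exact fun x => (sqrt_pos.2 (hpos x)).ne')
  rw [integral_comp_cos_eq_add_integral_comp_neg_cos (f := fun c => 1 / √(1 - m * c ^ 2))
    (hcont.intervalIntegrable _ _)]
  simp only [neg_sq]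
  rw [integral_comp_cos_eq_integral_comp_sin (fun c => 1 / √(1 - m * c ^ 2)), ellipticK]
  ring

/-- For `|z| < 1`, the lattice Green's function of the 2D fcc lattice equals
`(2/π) K(z²)`. -/
theorem lgf2_eq_ellipticK (z : ℝ) (hz : |z| < 1) :
    (1 / π ^ 2) * (∫ k₁ in (0:ℝ)..π, ∫ k₂ in (0:ℝ)..π,
        1 / (1 - z * Real.cos k₁ * Real.cos k₂)) =
      (2 / π) * ellipticK (z ^ 2) := by
  have hinner (k₁ : ℝ) : ∫ k₂ in (0:ℝ)..π, 1 / (1 - z * cos k₁ * cos k₂) =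
      π * (1 / √(1 - z ^ 2 * cos k₁ ^ 2)) := by
    rw [integral_one_div_one_sub_mul_cos (abs_mul_cos_lt_one hz k₁), mul_pow, mul_one_div]
  rw [integral_congr fun k₁ _ => hinner k₁, integral_const_mul,
    integral_one_div_sqrt_one_sub_mul_cos_sq ((sq_lt_one_iff_abs_lt_one z).2 hz)]
  field_simp
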